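/- Let F be a field of characteristic ≠ 2 and for i = 1, 2 let Q_i = Q(V_i, b_i, ×_i) be the quadratic algebra built from an F-vector space V_i, a symmetric bilinear form b_i on V_i, and an anticommutative bilinear product ×_i on V_i. If φ: Q₁ → Q₂ is a unital F-algebra isomorphism, then φ(V₁) = V₂, and for all u, v ∈ V₁ one has b₂(φ(u), φ(v)) = b₁(u, v) and φ(u ×₁ v) = φ(u) ×₂ φ(v). -/
import Mathlib


/-- The multiplication of the quadratic algebra `Q(V, b, ×)` on `F1 ⊕ V ≃ F × V`:
`(α1+u)(β1+v) = (αβ − b(u,v))1 + (αv + βu + u×v)`. -/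
def qAlgMul {F V : Type*} [Field F] [AddCommGroup V] [Module F V]
    (b : V →ₗ[F] V →ₗ[F] F) (c : V →ₗ[F] V →ₗ[F] V) (x y : F × V) : F × V :=
  (x.1 * y.1 - b x.2 y.2, x.1 • y.2 + y.1 • x.2 + c x.2 y.2)

lemma aux_czero {F V : Type*} [Field F] [AddCommGroup V] [Module F V]
    (hchar : (2 : F) ≠ 0) (c : V →ₗ[F] V →ₗ[F] V)
    (hanti : ∀ u v : V, c u v = - c v u) (v : V) : c v v = 0 := by
  have h : c v v + c v v = 0 := by
    nth_rewrite 1 [hanti v v]; simp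
  have h2 : (2 : F) • c v v = 0 := by rw [two_smul]; exact h
  rcases smul_eq_zero.mp h2 with h | h
  · exact absurd h hchar
  · exact h

lemma aux_fst_zero {F V₁ V₂ : Type*} [Field F]
    [AddCommGroup V₁] [Module F V₁] [AddCommGroup V₂] [Module F V₂]
    (hchar : (2 : F) ≠ 0)
    (b₁ : V₁ →ₗ[F] V₁ →ₗ[F] F)
    (c₁ : V₁ →ₗ[F] V₁ →ₗ[F] V₁) (hanti₁ : ∀ u v : V₁, c₁ u v = - c₁ v u)
    (b₂ : V₂ →ₗ[F] V₂ →ₗ[F] F)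
    (c₂ : V₂ →ₗ[F] V₂ →ₗ[F] V₂) (hanti₂ : ∀ u v : V₂, c₂ u v = - c₂ v u)
    (φ : (F × V₁) ≃ₗ[F] (F × V₂))
    (hone : φ ((1 : F), (0 : V₁)) = ((1 : F), (0 : V₂)))
    (hmul : ∀ x y : F × V₁, φ (qAlgMul b₁ c₁ x y) = qAlgMul b₂ c₂ (φ x) (φ y))
    (v : V₁) : (φ ((0 : F), v)).1 = 0 := by
  by_contra ha
  set a := (φ ((0 : F), v)).1 with hadef
  set w := (φ ((0 : F), v)).2 with hwdef
  have h := hmul ((0 : F), v) ((0 : F), v)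
  have hc1 : c₁ v v = 0 := aux_czero hchar c₁ hanti₁ v
  have hc2 : c₂ w w = 0 := aux_czero hchar c₂ hanti₂ w
  have hL : φ (qAlgMul b₁ c₁ ((0 : F), v) ((0 : F), v)) = (-(b₁ v v), (0 : V₂)) := by
    have : qAlgMul b₁ c₁ ((0 : F), v) ((0 : F), v) = ((-(b₁ v v)) • ((1 : F), (0 : V₁))) := by
      simp [qAlgMul, hc1, Prod.smul_def]
    rw [this, map_smul, hone, Prod.smul_def]
    simp
  have hR : qAlgMul b₂ c₂ (φ ((0 : F), v)) (φ ((0 : F), v)) =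
      (a * a - b₂ w w, a • w + a • w + c₂ w w) := rfl
  rw [hL, hR] at h
  have hsnd : a • w + a • w + c₂ w w = 0 := (Prod.ext_iff.mp h.symm).2
  rw [hc2, add_zero, ← two_smul F, smul_smul] at hsnd
  have h2a : (2 : F) * a ≠ 0 := mul_ne_zero hchar ha
  have hw : w = 0 := by
    rcases smul_eq_zero.mp hsnd with h' | h'
    · exact absurd h' h2a
    · exact h'
  -- then φ (0,v) = (a, 0) = φ (a • (1,0)), contradiction with injectivity
  have hφv : φ ((0 : F), v) = φ (a • ((1 : F), (0 : V₁))) := by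
    rw [map_smul, hone, Prod.smul_def]
    simp [Prod.ext_iff, ← hadef, ← hwdef, hw]
  have := φ.injective hφv
  rw [Prod.smul_def] at this
  have h0 : (0 : F) = a * 1 := (Prod.ext_iff.mp this).1
  simp at h0
  exact ha h0.symm

/-- Let `F` be a field of characteristic `≠ 2` and, for `i = 1, 2`, let
`Q_i = Q(V_i, b_i, ×_i)` be a quadratic algebra (with `b_i` symmetric and `×_i`
anticommutative).  Any unital `F`-algebra isomorphism `φ : Q₁ → Q₂` maps `V₁`
onto `V₂`, is an isometry `(V₁, b₁) → (V₂, b₂)`, and is an isomorphism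
`(V₁, ×₁) → (V₂, ×₂)` of anticommutative algebras. -/
theorem stmt18 {F V₁ V₂ : Type*} [Field F]
    [AddCommGroup V₁] [Module F V₁] [AddCommGroup V₂] [Module F V₂]
    (hchar : (2 : F) ≠ 0)
    (b₁ : V₁ →ₗ[F] V₁ →ₗ[F] F) (hsym₁ : ∀ u v : V₁, b₁ u v = b₁ v u)
    (c₁ : V₁ →ₗ[F] V₁ →ₗ[F] V₁) (hanti₁ : ∀ u v : V₁, c₁ u v = - c₁ v u)
    (b₂ : V₂ →ₗ[F] V₂ →ₗ[F] F) (hsym₂ : ∀ u v : V₂, b₂ u v = b₂ v u)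
    (c₂ : V₂ →ₗ[F] V₂ →ₗ[F] V₂) (hanti₂ : ∀ u v : V₂, c₂ u v = - c₂ v u)
    (φ : (F × V₁) ≃ₗ[F] (F × V₂))
    (hone : φ ((1 : F), (0 : V₁)) = ((1 : F), (0 : V₂)))
    (hmul : ∀ x y : F × V₁, φ (qAlgMul b₁ c₁ x y) = qAlgMul b₂ c₂ (φ x) (φ y)) :
    (∀ v : V₁, ∃ w : V₂, φ ((0 : F), v) = ((0 : F), w)) ∧
    (∀ w : V₂, ∃ v : V₁, φ ((0 : F), v) = ((0 : F), w)) ∧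
    (∀ u v : V₁,
      b₂ (φ ((0 : F), u)).2 (φ ((0 : F), v)).2 = b₁ u v ∧
      φ ((0 : F), c₁ u v) =
        ((0 : F), c₂ (φ ((0 : F), u)).2 (φ ((0 : F), v)).2)) := by
  have key : ∀ v : V₁, (φ ((0 : F), v)).1 = 0 :=
    aux_fst_zero hchar b₁ c₁ hanti₁ b₂ c₂ hanti₂ φ hone hmul
  have hone' : φ.symm ((1 : F), (0 : V₂)) = ((1 : F), (0 : V₁)) := by
    rw [← hone, LinearEquiv.symm_apply_apply]
  have hmul' : ∀ x y : F × V₂,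
      φ.symm (qAlgMul b₂ c₂ x y) = qAlgMul b₁ c₁ (φ.symm x) (φ.symm y) := by
    intro x y
    apply φ.injective
    rw [LinearEquiv.apply_symm_apply, hmul, LinearEquiv.apply_symm_apply,
      LinearEquiv.apply_symm_apply]
  have key' : ∀ w : V₂, (φ.symm ((0 : F), w)).1 = 0 :=
    aux_fst_zero hchar b₂ c₂ hanti₂ b₁ c₁ hanti₁ φ.symm hone' hmul'
  refine ⟨fun v => ⟨(φ ((0 : F), v)).2, ?_⟩, fun w => ⟨(φ.symm ((0 : F), w)).2, ?_⟩, ?_⟩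
  · exact Prod.ext (key v) rfl
  · have hh : ((0 : F), (φ.symm ((0 : F), w)).2) = φ.symm ((0 : F), w) := by
      ext
      · exact (key' w).symm
      · rfl
    rw [hh, LinearEquiv.apply_symm_apply]
  · intro u v
    have h := hmul ((0 : F), u) ((0 : F), v)
    have hL : qAlgMul b₁ c₁ ((0 : F), u) ((0 : F), v) =
        ((-(b₁ u v)) • ((1 : F), (0 : V₁))) + ((0 : F), c₁ u v) := by
      simp [qAlgMul, Prod.smul_def, Prod.ext_iff]
    rw [hL, map_add, map_smul, hone] at h
    have hfst := (Prod.ext_iff.mp h).1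
    have hsnd := (Prod.ext_iff.mp h).2
    simp only [Prod.smul_def, Prod.fst_add, Prod.snd_add, smul_eq_mul, mul_one,
      smul_zero, zero_add] at hfst hsnd
    rw [key (c₁ u v), add_zero] at hfst
    have hb : qAlgMul b₂ c₂ (φ ((0 : F), u)) (φ ((0 : F), v)) =
        ((φ ((0:F),u)).1 * (φ ((0:F),v)).1 - b₂ (φ ((0:F),u)).2 (φ ((0:F),v)).2,
         (φ ((0:F),u)).1 • (φ ((0:F),v)).2 + (φ ((0:F),v)).1 • (φ ((0:F),u)).2
           + c₂ (φ ((0:F),u)).2 (φ ((0:F),v)).2) := rfl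
    rw [hb] at hfst hsnd
    simp only [key u, key v, zero_mul, zero_sub, zero_smul, zero_add] at hfst hsnd
    constructor
    · have := neg_injective hfst
      exact this.symm
    · exact Prod.ext (key (c₁ u v)) hsnd
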